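/- arXiv:2508.06748 — 2 statements merged into one kernel-verified Lean document; each statement's English description precedes it below -/
import Mathlib

section
/- The function f₊ is strictly convex on the interval (−1,1). -/
open Real Set

/-- The standard Gaussian CDF. -/
noncomputable def Phi (x : ℝ) : ℝ := ∫ u in Set.Iic x, Real.exp (-u ^ 2 / 2) / Real.sqrt (2 * Real.pi)

/-- The smooth extension of `ln(1+t)/(t(2+t))` on `(−1,1)`, with `α(0) = 1/2`. -/
noncomputable def alphaFn (t : ℝ) : ℝ :=
  if t = 0 then 1 / 2 else Real.log (1 + t) / (t * (2 + t))

/-- `x₋(t) = −(1+t)·√(2α(t))`. -/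
noncomputable def xMinus (t : ℝ) : ℝ := -(1 + t) * Real.sqrt (2 * alphaFn t)

/-- `x₊(t) = (1−t)·√(2α(−t))`. -/
noncomputable def xPlus (t : ℝ) : ℝ := (1 - t) * Real.sqrt (2 * alphaFn (-t))

/-- `f₋(t) = Φ(x₋(t)/(1+t)) − Φ(x₋(t))`. -/
noncomputable def fMinus (t : ℝ) : ℝ := Phi (xMinus t / (1 + t)) - Phi (xMinus t)

/-- `f₊(t) = Φ(x₊(t)/(1−t)) − Φ(x₊(t))`. -/
noncomputable def fPlus (t : ℝ) : ℝ := Phi (xPlus t / (1 - t)) - Phi (xPlus t)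


open MeasureTheory

noncomputable def gden (u : ℝ) : ℝ := Real.exp (-u ^ 2 / 2) / Real.sqrt (2 * Real.pi)



lemma gden_cont : Continuous gden := by
  unfold gden; fun_prop

lemma gden_integrable : Integrable gden := by
  unfold gden
  have h : Integrable (fun u : ℝ => Real.exp (-(1/2) * u ^ 2)) := integrable_exp_neg_mul_sq (by norm_num)
  have := h.div_const (Real.sqrt (2 * Real.pi))
  convert this using 2 with u
  ring_nf

lemma hasDerivAt_Phi (x : ℝ) : HasDerivAt Phi (gden x) x := by
  have key : ∀ z : ℝ, Phi z = Phi 0 + ∫ u in (0:ℝ)..z, gden u := by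
    intro z
    have := intervalIntegral.integral_Iic_sub_Iic (μ := volume) (f := gden)
      (gden_integrable.integrableOn) (gden_integrable.integrableOn) (a := 0) (b := z)
    have hP : Phi z = ∫ u in Set.Iic z, gden u := rfl
    have hP0 : Phi 0 = ∫ u in Set.Iic (0:ℝ), gden u := rfl
    rw [hP, hP0]
    linarith [this]
  have hd : HasDerivAt (fun z => Phi 0 + ∫ u in (0:ℝ)..z, gden u) (gden x) x := by
    have := intervalIntegral.integral_hasDerivAt_right
      (f := gden) (a := 0) (b := x)
      (gden_integrable.intervalIntegrable)
      (gden_cont.stronglyMeasurableAtFilter _ _)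
      (gden_cont.continuousAt)
    exact (this.const_add (Phi 0))
  exact hd.congr_of_eventuallyEq (Filter.Eventually.of_forall key)


lemma alpha_pos {t : ℝ} (h1 : -1 < t) (h2 : t < 1) : 0 < alphaFn t := by
  unfold alphaFn
  rcases eq_or_ne t 0 with rfl | ht
  · norm_num
  · rw [if_neg ht]
    rcases lt_or_gt_of_ne ht with hlt | hgt
    · apply div_pos_of_neg_of_neg
      · exact Real.log_neg (by linarith) (by linarith)
      · nlinarith
    · apply div_pos
      · exact Real.log_pos (by linarith)
      · nlinarith

lemma log_identity {t : ℝ} (h2 : t < 1) :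
    Real.log (1 - t) = alphaFn (-t) * (t ^ 2 - 2 * t) := by
  unfold alphaFn
  rcases eq_or_ne t 0 with rfl | ht
  · norm_num
  · rw [if_neg (by simpa using ht)]
    have hD : t ^ 2 - 2 * t ≠ 0 := by
      rcases lt_or_gt_of_ne ht with h | h <;> nlinarith
    rw [show (1 : ℝ) + -t = 1 - t by ring, show -t * (2 + -t) = t ^ 2 - 2 * t by ring,
      div_mul_cancel₀ _ hD]

/-- The derivative of `t ↦ alphaFn (-t)`. -/
noncomputable def betaP (t : ℝ) : ℝ :=
  if t = 0 then 1 / 2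
  else ((1 - t) ^ 2 * (2 * alphaFn (-t)) - 1) / ((1 - t) * (t ^ 2 - 2 * t))

lemma hasDerivAt_beta_ne {t : ℝ} (h1 : -1 < t) (h2 : t < 1) (ht : t ≠ 0) :
    HasDerivAt (fun u => alphaFn (-u)) (betaP t) t := by
  have hD : t ^ 2 - 2 * t ≠ 0 := by
    rcases lt_or_gt_of_ne ht with h | h <;> nlinarith
  have h1t : (1:ℝ) - t > 0 := by linarith
  -- near t, alphaFn (-u) = log (1-u) / (u^2 - 2u)
  have heq : ∀ᶠ u in nhds t, Real.log (1 - u) / (u ^ 2 - 2 * u) = alphaFn (-u) := by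
    have : {u : ℝ | u ≠ 0} ∈ nhds t := isOpen_ne.mem_nhds ht
    filter_upwards [this] with u hu
    unfold alphaFn
    rw [if_neg (by simpa using hu)]
    have : (1 : ℝ) + -u = 1 - u := by ring
    rw [this]
    ring_nf
  have hL : HasDerivAt (fun u : ℝ => Real.log (1 - u)) (-(1 / (1 - t))) t := by
    have h0 : HasDerivAt (fun u : ℝ => 1 - u) (-1) t := by
      simpa [Pi.sub_def] using (hasDerivAt_const t (1:ℝ)).sub (hasDerivAt_id' t)
    simpa [Function.comp_def] using (Real.hasDerivAt_log (by linarith)).comp t h0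
  have hDd : HasDerivAt (fun u : ℝ => u ^ 2 - 2 * u) (2 * t - 2) t := by
    have := ((hasDerivAt_pow 2 t).sub ((hasDerivAt_id' t).const_mul 2))
    simpa [mul_comm, Pi.sub_def] using this
  have hdiv := hL.div hDd hD
  have := hdiv.congr_of_eventuallyEq (heq.mono fun u hu => hu.symm)
  refine this.congr_deriv ?_
  -- show betaP t equals the quotient-rule value
  have hid : Real.log (1 - t) = alphaFn (-t) * (t ^ 2 - 2 * t) := log_identity h2
  rw [betaP, if_neg ht, hid]
  field_simp
  ring

lemma hasDerivAt_alpha_zero : HasDerivAt alphaFn (-(1/2)) 0 := by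
  rw [hasDerivAt_iff_tendsto_slope]
  have hmem : {t : ℝ | |t| < 1/2} ∈ nhdsWithin (0:ℝ) {(0:ℝ)}ᶜ := by
    apply nhdsWithin_le_nhds
    have : Metric.ball (0:ℝ) (1/2) ∈ nhds (0:ℝ) := Metric.ball_mem_nhds _ (by norm_num)
    simpa [Real.ball_eq_Ioo, abs_lt, Set.mem_setOf_eq, Set.ext_iff, Metric.mem_ball,
      Real.dist_eq, sub_zero, Set.Ioo_def] using this
  have heq : ∀ᶠ t in nhdsWithin (0:ℝ) {(0:ℝ)}ᶜ,
      (Real.log (1 + t) - t + t ^ 2 / 2) / (t ^ 2 * (2 + t)) + -(1 / (2 + t))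
        = slope alphaFn 0 t := by
    filter_upwards [hmem, self_mem_nhdsWithin] with t hlt ht0
    have ht0' : t ≠ 0 := by simpa using ht0
    have h2t : (2:ℝ) + t > 0 := by
      rcases abs_lt.1 hlt with ⟨h1, h2⟩; linarith
    rw [slope_def_field, alphaFn, alphaFn, if_neg ht0', if_pos rfl]
    field_simp
    ring
  have h1 : Filter.Tendsto (fun t : ℝ => (Real.log (1 + t) - t + t ^ 2 / 2) / (t ^ 2 * (2 + t)))
      (nhdsWithin (0:ℝ) {(0:ℝ)}ᶜ) (nhds 0) := by
    apply squeeze_zero_norm' (a := fun t : ℝ => (4/3) * |t|) (f := fun t : ℝ => (Real.log (1 + t) - t + t ^ 2 / 2) / (t ^ 2 * (2 + t)))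
    · filter_upwards [hmem, self_mem_nhdsWithin] with t hlt ht0
      have ht0' : t ≠ 0 := by simpa using ht0
      have habs : |Real.log (1 + t) - t + t ^ 2 / 2| ≤ |t| ^ 3 / (1 - |t|) := by
        have := Real.abs_log_sub_add_sum_range_le (x := -t) (by rw [abs_neg]; linarith) 2
        simp only [Finset.sum_range_succ, Finset.sum_range_zero] at this
        rw [abs_neg] at this
        convert this using 2
        · push_cast
          ring
      have ht2 : (0:ℝ) < t ^ 2 := by positivity
      have h2t : |2 + t| ≥ 3/2 := by
        rcases abs_lt.1 hlt with ⟨ha, hb⟩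
        rw [abs_of_pos (by linarith)]; linarith
      have hden : |t ^ 2 * (2 + t)| ≥ t ^ 2 * (3/2) := by
        rw [abs_mul, abs_of_pos ht2]
        exact mul_le_mul_of_nonneg_left h2t (le_of_lt ht2)
      rw [Real.norm_eq_abs, abs_div]
      have h1t : 1 - |t| ≥ 1/2 := by linarith
      have hnum : |Real.log (1 + t) - t + t ^ 2 / 2| ≤ 2 * |t| ^ 3 := by
        refine habs.trans ?_
        rw [div_le_iff₀ (by linarith)]
        nlinarith [abs_nonneg t, pow_nonneg (abs_nonneg t) 3]
      have htabs : (0:ℝ) < |t| := abs_pos.mpr ht0'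
      calc |Real.log (1 + t) - t + t ^ 2 / 2| / |t ^ 2 * (2 + t)|
          ≤ (2 * |t| ^ 3) / (t ^ 2 * (3/2)) := by
            apply div_le_div₀ (by positivity) hnum (by positivity) hden
        _ = (4/3) * |t| := by
            field_simp
            rw [← sq_abs t]
            ring
    · have : Filter.Tendsto (fun t : ℝ => (4/3) * |t|) (nhds (0:ℝ)) (nhds 0) := by
        have := continuous_abs.tendsto (0:ℝ)
        simpa using (this.const_mul (4/3 : ℝ))
      exact this.mono_left nhdsWithin_le_nhds
  have h2 : Filter.Tendsto (fun t : ℝ => -(1 / (2 + t)))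
      (nhdsWithin (0:ℝ) {(0:ℝ)}ᶜ) (nhds (-(1/2))) := by
    have : Filter.Tendsto (fun t : ℝ => -(1 / (2 + t))) (nhds 0) (nhds (-(1/(2+0)))) := by
      apply Filter.Tendsto.neg
      apply Filter.Tendsto.div tendsto_const_nhds (by exact (continuous_const.add continuous_id).tendsto 0) (by norm_num)
    simpa using this.mono_left nhdsWithin_le_nhds
  have := (h1.add h2).congr' heq
  simpa using this

-- key polynomial inequality for t < 0 case, in terms of s = 1 - t > 1
lemma key_poly {s L D : ℝ} (hs : 1 < s) (hL : L = Real.log s) (hD : D = s ^ 2 - 1) :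
    0 < 4 * L ^ 2 * s ^ 2 * D - (2 * L * s ^ 2 - D) ^ 2 := by
  have hs0 : (0 : ℝ) < s := by linarith
  have hDpos : 0 < D := by nlinarith
  have hLpos : 0 < L := hL ▸ Real.log_pos hs
  have h1 : 2 * L < D := by
    have := Real.log_lt_sub_one_of_pos (x := s ^ 2) (by positivity) (by nlinarith)
    rw [Real.log_pow] at this
    push_cast at this
    rw [hL, hD]; linarith
  have h2 : D < 2 * s ^ 2 * L := by
    have hinv : Real.log (1 / s ^ 2) < 1 / s ^ 2 - 1 :=
      Real.log_lt_sub_one_of_pos (by positivity) (by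
        intro h
        have : s ^ 2 = 1 := by field_simp at h; linarith
        nlinarith)
    rw [one_div, Real.log_inv, Real.log_pow] at hinv
    push_cast at hinv
    rw [hL, hD]
    have hs2 : (0:ℝ) < s ^ 2 := by positivity
    have hcancel : s ^ 2 * (s ^ 2)⁻¹ = 1 := mul_inv_cancel₀ hs2.ne'
    nlinarith [mul_lt_mul_of_pos_left hinv hs2, hcancel]
  have ha : 0 ≤ L * s ^ 2 * (D - 2 * L) := by
    apply mul_nonneg (by positivity); linarith
  have hb : 0 < D * (2 * s ^ 2 * L - D) := mul_pos hDpos (by linarith)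
  nlinarith [ha, hb]

-- main positivity : for 1 < s, with β = log s / D, D = s^2-1:  4 β² s² D > (2 β s² - 1)²
lemma key_ineq {s β D : ℝ} (hs : 1 < s) (hD : D = s ^ 2 - 1) (hβ : β * D = Real.log s) :
    (2 * β * s ^ 2 - 1) ^ 2 < 4 * β ^ 2 * s ^ 2 * D := by
  have hDpos : 0 < D := by nlinarith
  have hβval : β = Real.log s / D := by
    field_simp [hDpos.ne'] at hβ ⊢; linarith
  set L := Real.log s with hL
  have key := key_poly hs rfl hD
  rw [hβval, ← sub_pos]
  have expand : 4 * (L / D) ^ 2 * s ^ 2 * D - (2 * (L / D) * s ^ 2 - 1) ^ 2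
      = (4 * L ^ 2 * s ^ 2 * D - (2 * L * s ^ 2 - D) ^ 2) / D ^ 2 := by
    field_simp
  rw [expand]
  positivity
noncomputable def yf (t : ℝ) : ℝ := Real.sqrt (2 * alphaFn (-t))

noncomputable def Ff (t : ℝ) : ℝ := yf t * gden ((1 - t) * yf t)

lemma gden_pos (u : ℝ) : 0 < gden u := by
  unfold gden
  have : 0 < Real.sqrt (2 * Real.pi) := Real.sqrt_pos.mpr (by positivity)
  positivity

lemma hasDerivAt_gden (x : ℝ) : HasDerivAt gden (-x * gden x) x := by
  have h1 : HasDerivAt (fun u : ℝ => -u ^ 2 / 2) (-x) x := by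
    have := ((hasDerivAt_pow 2 x).neg).div_const 2
    refine this.congr_deriv ?_
    push_cast
    ring
  have h2 := h1.exp
  have h3 := h2.div_const (Real.sqrt (2 * Real.pi))
  refine h3.congr_deriv ?_
  unfold gden; ring

lemma hasDerivAt_beta {t : ℝ} (h1 : -1 < t) (h2 : t < 1) :
    HasDerivAt (fun u => alphaFn (-u)) (betaP t) t := by
  rcases eq_or_ne t 0 with rfl | ht
  · have hneg : HasDerivAt (fun u : ℝ => -u) (-1) 0 := by
      simpa [Pi.neg_def] using (hasDerivAt_id' (0:ℝ)).neg
    have h0 : HasDerivAt alphaFn (-(1/2)) ((fun u : ℝ => -u) 0) := by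
      simpa using hasDerivAt_alpha_zero
    have hcomp := h0.comp 0 hneg
    simp only [Function.comp_def] at hcomp
    refine hcomp.congr_deriv ?_
    rw [betaP, if_pos rfl]; norm_num
  · exact hasDerivAt_beta_ne h1 h2 ht

lemma alpha_neg_pos {t : ℝ} (h1 : -1 < t) (h2 : t < 1) : 0 < alphaFn (-t) :=
  alpha_pos (by linarith) (by linarith)

lemma yf_pos {t : ℝ} (h1 : -1 < t) (h2 : t < 1) : 0 < yf t :=
  Real.sqrt_pos.mpr (by have := alpha_neg_pos h1 h2; linarith)

lemma yf_sq {t : ℝ} (h1 : -1 < t) (h2 : t < 1) : yf t ^ 2 = 2 * alphaFn (-t) :=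
  Real.sq_sqrt (by have := alpha_neg_pos h1 h2; linarith)

lemma hasDerivAt_yf {t : ℝ} (h1 : -1 < t) (h2 : t < 1) :
    HasDerivAt yf (betaP t / yf t) t := by
  have hpos : 0 < 2 * alphaFn (-t) := by have := alpha_neg_pos h1 h2; linarith
  have hβ := hasDerivAt_beta h1 h2
  have hsqrt := (Real.hasDerivAt_sqrt hpos.ne').comp t (hβ.const_mul 2)
  refine hsqrt.congr_deriv ?_
  rw [show Real.sqrt (2 * alphaFn (-t)) = yf t from rfl]
  field_simp [(yf_pos h1 h2).ne']

lemma gden_scale {t : ℝ} (h1 : -1 < t) (h2 : t < 1) :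
    gden (yf t) = (1 - t) * gden ((1 - t) * yf t) := by
  have h1t : (0:ℝ) < 1 - t := by linarith
  have hy2 := yf_sq h1 h2
  have hlog := log_identity h2
  have harg : -(yf t) ^ 2 / 2 = Real.log (1 - t) + -((1 - t) * yf t) ^ 2 / 2 := by
    linear_combination (-1 : ℝ) * hlog + ((1 - t) ^ 2 / 2 - 1 / 2) * hy2
  unfold gden
  rw [harg, Real.exp_add, Real.exp_log h1t]
  ring

lemma hasDerivAt_fPlus {t : ℝ} (h1 : -1 < t) (h2 : t < 1) :
    HasDerivAt fPlus (Ff t) t := by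
  have hy := hasDerivAt_yf h1 h2
  have hx : HasDerivAt (fun u => (1 - u) * yf u)
      ((-1) * yf t + (1 - t) * (betaP t / yf t)) t := by
    have hc : HasDerivAt (fun u : ℝ => 1 - u) (-1) t := by
      simpa [Pi.sub_def] using (hasDerivAt_const t (1:ℝ)).sub (hasDerivAt_id' t)
    exact hc.mul hy
  have hΦ1 := (hasDerivAt_Phi (yf t)).comp t hy
  have hΦ2 := (hasDerivAt_Phi ((1 - t) * yf t)).comp t hx
  have hsub := hΦ1.sub hΦ2
  have heq : ∀ᶠ u in nhds t, (fun u => Phi (yf u) - Phi ((1 - u) * yf u)) u = fPlus u := by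
    have : {u : ℝ | u < 1} ∈ nhds t := isOpen_Iio.mem_nhds h2
    filter_upwards [this] with u hu
    have h1u : (1:ℝ) - u ≠ 0 := sub_ne_zero.mpr (by intro h; exact absurd hu (by rw [h]; simp))
    unfold fPlus xPlus yf
    rw [mul_comm ((1:ℝ) - u), mul_div_assoc, div_self h1u, mul_one]
  have := hsub.congr_of_eventuallyEq (heq.mono fun u hu => hu.symm)
  refine this.congr_deriv ?_
  rw [Ff, gden_scale h1 h2]
  ring

lemma Ff_deriv_aux {t : ℝ} (h1 : -1 < t) (h2 : t < 1) :
    0 < betaP t * (1 - (1 - t) ^ 2 * (2 * alphaFn (-t))) + 4 * alphaFn (-t) ^ 2 * (1 - t) := by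
  set β := alphaFn (-t) with hβdef
  have hβ : 0 < β := alpha_neg_pos h1 h2
  have hs : (0:ℝ) < 1 - t := by linarith
  rcases eq_or_ne t 0 with rfl | ht
  · rw [betaP, if_pos rfl]
    have : β = 1/2 := by rw [hβdef, neg_zero, alphaFn, if_pos rfl]
    rw [this]; norm_num
  · have hD : t ^ 2 - 2 * t ≠ 0 := by
      rcases lt_or_gt_of_ne ht with h | h <;> nlinarith
    have hbeq : betaP t * ((1 - t) * (t ^ 2 - 2 * t)) = (1 - t) ^ 2 * (2 * β) - 1 := by
      rw [betaP, if_neg ht, div_mul_cancel₀ _ (mul_ne_zero hs.ne' hD)]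
    rcases lt_or_gt_of_ne ht with hneg | hpos
    · -- t < 0 : hard case
      have hDpos : 0 < t ^ 2 - 2 * t := by nlinarith
      have hsD : 0 < (1 - t) * (t ^ 2 - 2 * t) := mul_pos hs hDpos
      have hkey : (2 * β * (1 - t) ^ 2 - 1) ^ 2 < 4 * β ^ 2 * (1 - t) ^ 2 * (t ^ 2 - 2 * t) := by
        apply key_ineq (s := 1 - t) (by linarith) (by ring)
        rw [← log_identity h2]
      have hb1P : betaP t * (1 - (1 - t) ^ 2 * (2 * β)) * ((1 - t) * (t ^ 2 - 2 * t))
          = -((1 - t) ^ 2 * (2 * β) - 1) ^ 2 := by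
        linear_combination (1 - (1 - t) ^ 2 * (2 * β)) * hbeq
      nlinarith [hb1P, hkey, hsD]
    · -- 0 < t : easy case
      have hDneg : t ^ 2 - 2 * t < 0 := by nlinarith
      have hsD : (1 - t) * (t ^ 2 - 2 * t) < 0 := mul_neg_of_pos_of_neg hs hDneg
      have hb1P : betaP t * (1 - (1 - t) ^ 2 * (2 * β)) * ((1 - t) * (t ^ 2 - 2 * t))
          = -((1 - t) ^ 2 * (2 * β) - 1) ^ 2 := by
        linear_combination (1 - (1 - t) ^ 2 * (2 * β)) * hbeq
      have h0 : 0 ≤ betaP t * (1 - (1 - t) ^ 2 * (2 * β)) := by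
        nlinarith [hb1P, sq_nonneg ((1 - t) ^ 2 * (2 * β) - 1)]
      have h4 : 0 < 4 * β ^ 2 * (1 - t) := by positivity
      linarith

lemma hasDerivAt_Ff {t : ℝ} (h1 : -1 < t) (h2 : t < 1) :
    HasDerivAt Ff ((betaP t / yf t) * gden ((1 - t) * yf t)
      + yf t * (-((1 - t) * yf t) * gden ((1 - t) * yf t)
          * ((-1) * yf t + (1 - t) * (betaP t / yf t)))) t := by
  have hy := hasDerivAt_yf h1 h2
  have hx : HasDerivAt (fun u => (1 - u) * yf u)
      ((-1) * yf t + (1 - t) * (betaP t / yf t)) t := by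
    have hc : HasDerivAt (fun u : ℝ => 1 - u) (-1) t := by
      simpa [Pi.sub_def] using (hasDerivAt_const t (1:ℝ)).sub (hasDerivAt_id' t)
    exact hc.mul hy
  have hg := (hasDerivAt_gden ((1 - t) * yf t)).comp t hx
  exact hy.mul hg

lemma Ff_deriv_pos {t : ℝ} (h1 : -1 < t) (h2 : t < 1) :
    0 < (betaP t / yf t) * gden ((1 - t) * yf t)
      + yf t * (-((1 - t) * yf t) * gden ((1 - t) * yf t)
          * ((-1) * yf t + (1 - t) * (betaP t / yf t))) := by
  set y := yf t with hydef
  set b := betaP t with hbdef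
  set β := alphaFn (-t) with hβdef
  have hy : 0 < y := yf_pos h1 h2
  have hy2 : y ^ 2 = 2 * β := yf_sq h1 h2
  have hg : 0 < gden ((1 - t) * y) := gden_pos _
  have hE : (b / y - y * ((1 - t) * y) * ((-1) * y + (1 - t) * (b / y))) * y
      = b * (1 - (1 - t) ^ 2 * (2 * β)) + 4 * β ^ 2 * (1 - t) := by
    field_simp
    linear_combination ((1 - t) * y ^ 2 + 2 * β * (1 - t) - b * (1 - t) ^ 2) * hy2
    
  have haux := Ff_deriv_aux h1 h2
  have hEpos : 0 < b / y - y * ((1 - t) * y) * ((-1) * y + (1 - t) * (b / y)) := by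
    nlinarith [hE, haux, hy]
  have : (b / y) * gden ((1 - t) * y)
      + y * (-((1 - t) * y) * gden ((1 - t) * y) * ((-1) * y + (1 - t) * (b / y)))
      = gden ((1 - t) * y) * (b / y - y * ((1 - t) * y) * ((-1) * y + (1 - t) * (b / y))) := by
    ring
  rw [this]
  exact mul_pos hg hEpos

lemma strictMonoOn_Ff : StrictMonoOn Ff (Set.Ioo (-1:ℝ) 1) := by
  apply strictMonoOn_of_deriv_pos (convex_Ioo _ _)
  · intro t ht
    exact (hasDerivAt_Ff ht.1 ht.2).continuousAt.continuousWithinAt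
  · intro t ht
    rw [interior_Ioo] at ht
    rw [(hasDerivAt_Ff ht.1 ht.2).deriv]
    exact Ff_deriv_pos ht.1 ht.2

theorem fPlus_strictConvex : StrictConvexOn ℝ (Set.Ioo (-1 : ℝ) 1) fPlus := by
  apply StrictMonoOn.strictConvexOn_of_deriv (convex_Ioo _ _)
  · intro t ht
    exact (hasDerivAt_fPlus ht.1 ht.2).continuousAt.continuousWithinAt
  · rw [interior_Ioo]
    have heq : Set.EqOn Ff (deriv fPlus) (Set.Ioo (-1:ℝ) 1) :=
      fun t ht => ((hasDerivAt_fPlus ht.1 ht.2).deriv).symm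
    exact strictMonoOn_Ff.congr heq
end

section
/- As t → 1⁻, f₊(t) → 1/2; moreover f₊(0) = 0, and since f₊ is convex on (−1,1), it follows that f₊(t) ≤ t/2 for all t ∈ [0,1). -/
open Real Set

open Real Set MeasureTheory Filter Topology

noncomputable def gauss (x : ℝ) : ℝ := Real.exp (-x ^ 2 / 2) / Real.sqrt (2 * Real.pi)

noncomputable def qF (t : ℝ) : ℝ := 2 * alphaFn (-t)

noncomputable def qD (t : ℝ) : ℝ :=
  if t = 0 then 1 else (2 * (t * (2 - t)) / (1 - t) + 4 * Real.log (1 - t) * (1 - t)) / (t * (2 - t)) ^ 2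

noncomputable def cF (t : ℝ) : ℝ := Real.sqrt (qF t)

noncomputable def gF (t : ℝ) : ℝ := cF t * gauss ((1 - t) * cF t)

lemma gauss_cont : Continuous gauss := by
  unfold gauss; fun_prop

lemma gauss_pos (x : ℝ) : 0 < gauss x :=
  div_pos (exp_pos _) (sqrt_pos.mpr (by positivity))

lemma gauss_integrable : Integrable gauss := by
  have h : Integrable (fun x : ℝ => Real.exp (-(1/2) * x ^ 2)) := integrable_exp_neg_mul_sq (by norm_num)
  have := h.div_const (Real.sqrt (2 * Real.pi))
  refine this.congr (Eventually.of_forall fun x => ?_)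
  unfold gauss; ring_nf

lemma gauss_integral : ∫ x, gauss x = 1 := by
  have h : (∫ x : ℝ, Real.exp (-(1/2) * x ^ 2)) = Real.sqrt (Real.pi / (1/2)) := integral_gaussian (1/2)
  have h2 : (∫ x, gauss x) = (∫ x : ℝ, Real.exp (-(1/2) * x ^ 2)) / Real.sqrt (2 * Real.pi) := by
    rw [← integral_div]
    congr 1; ext x; unfold gauss; ring_nf
  rw [h2, h]
  rw [div_eq_one_iff_eq (by positivity)]
  congr 1; ring

lemma Phi_eq (x : ℝ) : Phi x = ∫ u in Set.Iic x, gauss u := rfl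

lemma Phi_sub (a b : ℝ) : Phi b - Phi a = ∫ u in a..b, gauss u := by
  rw [Phi_eq, Phi_eq]
  exact intervalIntegral.integral_Iic_sub_Iic gauss_integrable.integrableOn gauss_integrable.integrableOn

lemma Phi_hasDerivAt (x : ℝ) : HasDerivAt Phi (gauss x) x := by
  have h : ∀ y, Phi y = Phi 0 + ∫ u in (0:ℝ)..y, gauss u := by
    intro y; rw [← Phi_sub]; ring
  have hd : HasDerivAt (fun y => Phi 0 + ∫ u in (0:ℝ)..y, gauss u) (gauss x) x := by
    refine HasDerivAt.const_add _ ?_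
    exact intervalIntegral.integral_hasDerivAt_right gauss_integrable.intervalIntegrable
      (gauss_cont.stronglyMeasurableAtFilter _ _) gauss_cont.continuousAt
  exact hd.congr_of_eventuallyEq (Eventually.of_forall h)

lemma Phi_continuous : Continuous Phi := by
  have : ∀ x, ContinuousAt Phi x := fun x => (Phi_hasDerivAt x).continuousAt
  exact continuous_iff_continuousAt.mpr this

lemma Phi_zero : Phi 0 = 1 / 2 := by
  have hsymm : (∫ u in Set.Iic (0:ℝ), gauss u) = ∫ u in Set.Ioi (0:ℝ), gauss u := by
    have := integral_comp_neg_Iic (0:ℝ) gauss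
    rw [neg_zero] at this
    rw [← this]
    congr 1; ext u; unfold gauss; rw [neg_pow]; norm_num
  have hadd : (∫ u in Set.Iic (0:ℝ), gauss u) + ∫ u in Set.Ioi (0:ℝ), gauss u = 1 := by
    rw [← gauss_integral]
    rw [← MeasureTheory.integral_add_compl (measurableSet_Iic (a := (0:ℝ))) gauss_integrable]
    congr 1
    simp
  rw [Phi_eq]
  rw [hsymm] at hadd ⊢
  linarith

lemma Phi_tendsto_one : Tendsto Phi atTop (nhds 1) := by
  have h : ∀ y, Phi y = Phi 0 + ∫ u in (0:ℝ)..y, gauss u := by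
    intro y; rw [← Phi_sub]; ring
  have hlim : Tendsto (fun y => ∫ u in (0:ℝ)..y, gauss u) atTop
      (nhds (∫ u in Set.Ioi (0:ℝ), gauss u)) :=
    MeasureTheory.intervalIntegral_tendsto_integral_Ioi 0 gauss_integrable.integrableOn tendsto_id
  have htot : Phi 0 + ∫ u in Set.Ioi (0:ℝ), gauss u = 1 := by
    rw [Phi_eq, ← gauss_integral,
      ← MeasureTheory.integral_add_compl (measurableSet_Iic (a := (0:ℝ))) gauss_integrable]
    congr 2
    simp
  have := hlim.const_add (Phi 0)
  rw [htot] at this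
  exact this.congr (fun y => (h y).symm)

lemma qF_zero : qF 0 = 1 := by simp [qF, alphaFn]

lemma qF_eq {t : ℝ} (ht : t ≠ 0) : qF t = -2 * Real.log (1 - t) / (t * (2 - t)) := by
  have : (-t : ℝ) ≠ 0 := neg_ne_zero.mpr ht
  simp only [qF, alphaFn, this, if_false]
  have h1 : (1 : ℝ) + -t = 1 - t := by ring
  rw [h1]
  have h2 : -t * (2 + -t) = -(t * (2 - t)) := by ring
  rw [h2, div_neg]
  ring

lemma qF_pos {t : ℝ} (ht : t ∈ Ioo (-1 : ℝ) 1) : 0 < qF t := by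
  rcases eq_or_ne t 0 with h | h
  · rw [h, qF_zero]; norm_num
  rw [qF_eq h]
  rcases lt_or_gt_of_ne h with hneg | hpos
  · have hL : 0 < Real.log (1 - t) := Real.log_pos (by linarith)
    have hD : t * (2 - t) < 0 := mul_neg_of_neg_of_pos hneg (by linarith [ht.2])
    exact div_pos_of_neg_of_neg (by linarith) hD
  · have hL : Real.log (1 - t) < 0 := Real.log_neg (by linarith [ht.2]) (by linarith)
    have hD : 0 < t * (2 - t) := mul_pos hpos (by linarith [ht.2])
    exact div_pos (by linarith) hD

lemma qF_rel {t : ℝ} (ht : t < 1) : qF t * (t * (2 - t)) = -2 * Real.log (1 - t) := by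
  rcases eq_or_ne t 0 with h | h
  · simp [h, qF_zero]
  · rw [qF_eq h, div_mul_cancel₀]
    exact mul_ne_zero h (by linarith)

lemma hasDerivAt_qF_ne {t : ℝ} (ht : t ∈ Ioo (-1 : ℝ) 1) (h0 : t ≠ 0) :
    HasDerivAt qF (qD t) t := by
  have h1t : (1 : ℝ) - t ≠ 0 := by intro h; linarith [ht.2]
  have h1t' : (0:ℝ) < 1 - t := by linarith [ht.2]
  have hD : t * (2 - t) ≠ 0 := mul_ne_zero h0 (by linarith [ht.2])
  have hnum : HasDerivAt (fun t : ℝ => -2 * Real.log (1 - t)) (2 / (1 - t)) t := by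
    have h := ((hasDerivAt_id t).const_sub 1).log h1t
    have := h.const_mul (-2 : ℝ)
    refine this.congr_deriv ?_
    simp only [id_eq]
    field_simp
  have hden : HasDerivAt (fun t : ℝ => t * (2 - t)) (2 - 2 * t) t := by
    have := (hasDerivAt_id t).mul ((hasDerivAt_id t).const_sub 2)
    refine this.congr_deriv ?_
    simp only [id_eq]
    ring
  have hdiv := hnum.div hden hD
  have heq : (2 / (1 - t) * (t * (2 - t)) - -2 * Real.log (1 - t) * (2 - 2 * t)) / (t * (2 - t)) ^ 2
      = qD t := by
    rw [qD, if_neg h0]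
    field_simp
    ring
  rw [heq] at hdiv
  refine hdiv.congr_of_eventuallyEq ?_
  filter_upwards [compl_singleton_mem_nhds h0] with x hx
  exact qF_eq hx

lemma hasDerivAt_qF_zero : HasDerivAt qF (qD 0) 0 := by
  rw [qD, if_pos rfl]
  rw [hasDerivAt_iff_tendsto_slope]
  have hev : ∀ᶠ t in 𝓝[≠] (0:ℝ), slope qF 0 t =
      2 / (2 - t) + (-2) * (Real.log (1 - t) + t + t ^ 2 / 2) / (t ^ 2 * (2 - t)) := by
    have hmem : Ioo (-(1/2) : ℝ) (1/2) ∈ 𝓝 (0:ℝ) := by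
      apply Ioo_mem_nhds <;> norm_num
    filter_upwards [self_mem_nhdsWithin, mem_nhdsWithin_of_mem_nhds hmem] with t ht htI
    have ht0 : t ≠ 0 := ht
    have h2t : (2 : ℝ) - t ≠ 0 := by
      have := htI.2; intro h; norm_num at this ⊢; linarith
    rw [slope_def_field, qF_eq ht0, qF_zero]
    field_simp
    ring
  rw [tendsto_congr' hev]
  have h1 : Tendsto (fun t : ℝ => 2 / (2 - t)) (𝓝[≠] 0) (𝓝 1) := by
    have : Tendsto (fun t : ℝ => 2 / (2 - t)) (𝓝 0) (𝓝 (2 / (2 - 0))) := by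
      apply Tendsto.div tendsto_const_nhds (tendsto_const_nhds.sub tendsto_id) (by norm_num)
    norm_num at this
    exact this.mono_left nhdsWithin_le_nhds
  have h2 : Tendsto (fun t : ℝ => (-2) * (Real.log (1 - t) + t + t ^ 2 / 2) / (t ^ 2 * (2 - t)))
      (𝓝[≠] 0) (𝓝 0) := by
    have hbound : ∀ᶠ t in 𝓝[≠] (0:ℝ),
        ‖(-2) * (Real.log (1 - t) + t + t ^ 2 / 2) / (t ^ 2 * (2 - t))‖ ≤ 3 * |t| := by
      have hmem : Ioo (-(1/2) : ℝ) (1/2) ∈ 𝓝 (0:ℝ) := by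
        apply Ioo_mem_nhds <;> norm_num
      filter_upwards [self_mem_nhdsWithin, mem_nhdsWithin_of_mem_nhds hmem] with t ht htI
      have ht0 : t ≠ 0 := ht
      have htabs : |t| < 1/2 := abs_lt.mpr ⟨by linarith [htI.1], by linarith [htI.2]⟩
      have hlog : |Real.log (1 - t) + t + t ^ 2 / 2| ≤ |t| ^ 3 / (1 - |t|) := by
        have h := Real.abs_log_sub_add_sum_range_le (x := t) (by linarith) 2
        simp only [Finset.sum_range_succ, Finset.sum_range_zero] at h
        norm_num at h
        calc |Real.log (1 - t) + t + t ^ 2 / 2| = |t + t ^ 2 / 2 + Real.log (1 - t)| := by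
              ring_nf
          _ ≤ |t| ^ 3 / (1 - |t|) := h
      have hb : |t| ^ 3 / (1 - |t|) ≤ 2 * |t| ^ 3 := by
        rw [div_le_iff₀ (by linarith)]
        nlinarith [abs_nonneg t, pow_nonneg (abs_nonneg t) 3]
      have hden : |t ^ 2 * (2 - t)| = t ^ 2 * (2 - t) := by
        apply abs_of_pos
        apply mul_pos (by positivity) (by linarith [htI.2])
      have hden2 : (3/2 : ℝ) * t ^ 2 ≤ t ^ 2 * (2 - t) := by nlinarith [sq_nonneg t, htI.2]
      rw [norm_eq_abs, abs_div, abs_mul, hden]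
      rw [div_le_iff₀ (by nlinarith [sq_abs t, abs_pos.mpr ht0, sq_nonneg t] : (0:ℝ) < t ^ 2 * (2 - t))]
      have : |(-2 : ℝ)| = 2 := by norm_num
      rw [this]
      calc 2 * |Real.log (1 - t) + t + t ^ 2 / 2| ≤ 2 * (2 * |t| ^ 3) := by
            apply mul_le_mul_of_nonneg_left (le_trans hlog hb) (by norm_num)
        _ ≤ 3 * |t| * (t ^ 2 * (2 - t)) := by
            have h1 : |t| ^ 3 = |t| * t ^ 2 := by rw [pow_succ, sq_abs]; ring
            nlinarith [abs_nonneg t, sq_nonneg t, htI.2, abs_lt.mp htabs]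
    have hlim : Tendsto (fun t : ℝ => 3 * |t|) (𝓝[≠] (0:ℝ)) (𝓝 0) := by
      have : Tendsto (fun t : ℝ => 3 * |t|) (𝓝 0) (𝓝 (3 * |(0:ℝ)|)) :=
        (continuous_const.mul continuous_abs).tendsto 0
      norm_num at this
      exact this.mono_left nhdsWithin_le_nhds
    exact squeeze_zero_norm' hbound hlim
  have := h1.add h2
  norm_num at this ⊢
  convert this using 2

lemma qD_zero : qD 0 = 1 := by rw [qD, if_pos rfl]

lemma hasDerivAt_qF {t : ℝ} (ht : t ∈ Ioo (-1 : ℝ) 1) : HasDerivAt qF (qD t) t := by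
  rcases eq_or_ne t 0 with h | h
  · rw [h]; exact hasDerivAt_qF_zero
  · exact hasDerivAt_qF_ne ht h

lemma cF_pos {t : ℝ} (ht : t ∈ Ioo (-1 : ℝ) 1) : 0 < cF t := Real.sqrt_pos.mpr (qF_pos ht)

lemma cF_sq {t : ℝ} (ht : t ∈ Ioo (-1 : ℝ) 1) : cF t ^ 2 = qF t := Real.sq_sqrt (qF_pos ht).le

lemma hasDerivAt_cF {t : ℝ} (ht : t ∈ Ioo (-1 : ℝ) 1) :
    HasDerivAt cF (qD t / (2 * cF t)) t :=
  (hasDerivAt_qF ht).sqrt (qF_pos ht).ne'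

lemma gauss_id {t : ℝ} (ht : t ∈ Ioo (-1 : ℝ) 1) :
    gauss (cF t) = (1 - t) * gauss ((1 - t) * cF t) := by
  have hs : (0:ℝ) < 1 - t := by linarith [ht.2]
  have key : -(cF t) ^ 2 / 2 = -((1 - t) * cF t) ^ 2 / 2 + Real.log (1 - t) := by
    have h1 : cF t ^ 2 = qF t := cF_sq ht
    have h2 := qF_rel ht.2
    have h3 : cF t ^ 2 * (t * (2 - t)) = -2 * Real.log (1 - t) := by rw [h1]; exact h2
    linear_combination (-(1:ℝ)/2) * h3
  unfold gauss
  rw [key, Real.exp_add, Real.exp_log hs]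
  ring

lemma hasDerivAt_gauss (x : ℝ) : HasDerivAt gauss (-x * gauss x) x := by
  have h1 : HasDerivAt (fun x : ℝ => -x ^ 2 / 2) (-x) x := by
    have := ((hasDerivAt_pow 2 x).neg).div_const 2
    refine this.congr_deriv ?_
    simp; ring
  have h2 := (h1.exp).div_const (Real.sqrt (2 * Real.pi))
  refine h2.congr_deriv ?_
  unfold gauss
  ring

lemma key_ineq_s18 {t : ℝ} (ht : t ∈ Ioo (-1 : ℝ) 1) :
    0 ≤ qD t * (1 - (1 - t) ^ 2 * qF t) + 2 * (1 - t) * qF t ^ 2 := by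
  rcases eq_or_ne t 0 with h | h
  · rw [h, qD_zero, qF_zero]; norm_num
  have hs : (0:ℝ) < 1 - t := by linarith [ht.2]
  have h2t : (0:ℝ) < 2 - t := by linarith [ht.2]
  set L := Real.log (1 - t) with hL
  set D := t * (2 - t) with hD
  have hDne : D ≠ 0 := mul_ne_zero h (by linarith)
  have hEeq : qD t * (1 - (1 - t) ^ 2 * qF t) + 2 * (1 - t) * qF t ^ 2 =
      (2 * (D + 2 * L * (1 - t) ^ 2) ^ 2 + 8 * (1 - t) ^ 2 * L ^ 2 * D) / ((1 - t) * D ^ 3) := by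
    rw [qD, if_neg h, qF_eq h, ← hL, ← hD]
    field_simp
    ring
  rw [hEeq]
  rcases lt_or_gt_of_ne h with hneg | hpos
  · -- t < 0 : D < 0, need numerator ≤ 0
    have hDneg : D < 0 := mul_neg_of_neg_of_pos hneg h2t
    rw [div_nonneg_iff]
    right
    constructor
    · -- numerator ≤ 0
      set u : ℝ := (1 - t) ^ 2 with hu
      have hu1 : 1 < u := by nlinarith
      have hu4 : u < 4 := by nlinarith [ht.1]
      have hM : Real.log u = 2 * L := by
        rw [hu, hL, show ((1:ℝ) - t) ^ 2 = (1 - t) * (1 - t) by ring,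
          Real.log_mul hs.ne' hs.ne']
        ring
      set M := Real.log u with hMdef
      have hMpos : 0 < M := Real.log_pos hu1
      have hub : M ≤ u - 1 := Real.log_le_sub_one_of_pos (by linarith)
      have hlb : u - 1 ≤ u * M := by
        have h1 : Real.log (1 / u) ≤ 1 / u - 1 :=
          Real.log_le_sub_one_of_pos (by positivity)
        rw [Real.log_div one_ne_zero (by linarith), Real.log_one] at h1
        have h2 : 1 - 1 / u ≤ M := by linarith
        have := mul_le_mul_of_nonneg_left h2 (by linarith : (0:ℝ) ≤ u)
        rw [mul_sub, mul_one_div, div_self (by linarith : u ≠ 0)] at this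
        linarith
      have hDu : D = 1 - u := by rw [hD, hu]; ring
      have hL2 : L = M / 2 := by rw [hM]; ring
      rw [hDu, hL2]
      have hprod : 0 ≤ (u * M - (u - 1)) * ((u - 1) - M) :=
        mul_nonneg (by linarith) (by linarith)
      nlinarith [hprod, mul_nonneg (mul_nonneg (by linarith : (0:ℝ) ≤ u - 1) (by linarith : (0:ℝ) ≤ u - 1)) hMpos.le, sq_nonneg (1 - u + M * u), hMpos.le, hu1.le]
    · -- denominator ≤ 0
      have : D ^ 3 < 0 := by
        calc D ^ 3 = D * D ^ 2 := by ring
          _ < 0 := mul_neg_of_neg_of_pos hDneg (by positivity)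
      nlinarith [hs]
  · -- t > 0 : all nonneg
    have hDpos : 0 < D := mul_pos hpos h2t
    apply div_nonneg
    · nlinarith [sq_nonneg (D + 2 * L * (1 - t) ^ 2), sq_nonneg ((1 - t) * L), hDpos.le]
    · positivity

lemma xPlus_eq (t : ℝ) : xPlus t = (1 - t) * cF t := rfl

lemma fPlus_eq {t : ℝ} (ht : t < 1) : fPlus t = Phi (cF t) - Phi ((1 - t) * cF t) := by
  rw [fPlus, xPlus_eq, mul_div_cancel_left₀ _ (by intro h; linarith : (1:ℝ) - t ≠ 0)]

lemma hasDerivAt_lin {t : ℝ} (ht : t ∈ Ioo (-1 : ℝ) 1) :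
    HasDerivAt (fun t : ℝ => (1 - t) * cF t) (-1 * cF t + (1 - t) * (qD t / (2 * cF t))) t := by
  have h1 : HasDerivAt (fun t : ℝ => 1 - t) (-1) t := by
    simpa using (hasDerivAt_id t).const_sub 1
  exact h1.mul (hasDerivAt_cF ht)

lemma hasDerivAt_fPlus_s18 {t : ℝ} (ht : t ∈ Ioo (-1 : ℝ) 1) : HasDerivAt fPlus (gF t) t := by
  have hc := hasDerivAt_cF ht
  have hPhi1 := (Phi_hasDerivAt (cF t)).comp t hc
  have hPhi2 := (Phi_hasDerivAt ((1 - t) * cF t)).comp t (hasDerivAt_lin ht)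
  have hsum := hPhi1.sub hPhi2
  have heq : gauss (cF t) * (qD t / (2 * cF t)) -
      gauss ((1 - t) * cF t) * (-1 * cF t + (1 - t) * (qD t / (2 * cF t))) = gF t := by
    rw [gauss_id ht, gF]
    ring
  rw [heq] at hsum
  refine hsum.congr_of_eventuallyEq ?_
  filter_upwards [Iio_mem_nhds ht.2] with x hx
  exact fPlus_eq hx

lemma hasDerivAt_gF {t : ℝ} (ht : t ∈ Ioo (-1 : ℝ) 1) :
    HasDerivAt gF (gauss ((1 - t) * cF t) *
      ((qD t * (1 - (1 - t) ^ 2 * qF t) + 2 * (1 - t) * qF t ^ 2) / (2 * cF t))) t := by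
  have hc := hasDerivAt_cF ht
  have hgauss := (hasDerivAt_gauss ((1 - t) * cF t)).comp t (hasDerivAt_lin ht)
  have hprod := hc.mul hgauss
  have heq : gauss ((1 - t) * cF t) *
      ((qD t * (1 - (1 - t) ^ 2 * qF t) + 2 * (1 - t) * qF t ^ 2) / (2 * cF t)) =
      qD t / (2 * cF t) * gauss ((1 - t) * cF t) +
      cF t * (-((1 - t) * cF t) * gauss ((1 - t) * cF t) *
        (-1 * cF t + (1 - t) * (qD t / (2 * cF t)))) := by
    rw [← cF_sq ht]
    have hcne : cF t ≠ 0 := (cF_pos ht).ne'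
    field_simp
    ring
  rw [heq]
  exact hprod

lemma gF_monotone : MonotoneOn gF (Ioo (-1 : ℝ) 1) := by
  apply monotoneOn_of_deriv_nonneg (convex_Ioo _ _)
  · exact fun x hx => (hasDerivAt_gF hx).continuousAt.continuousWithinAt
  · rw [isOpen_Ioo.interior_eq]
    exact fun x hx => (hasDerivAt_gF hx).differentiableAt.differentiableWithinAt
  · rw [isOpen_Ioo.interior_eq]
    intro x hx
    rw [(hasDerivAt_gF hx).deriv]
    exact mul_nonneg (gauss_pos _).le
      (div_nonneg (key_ineq_s18 hx) (by linarith [cF_pos hx]))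

lemma fPlus_convexOn : ConvexOn ℝ (Ioo (-1 : ℝ) 1) fPlus := by
  apply MonotoneOn.convexOn_of_deriv (convex_Ioo _ _)
  · exact fun x hx => (hasDerivAt_fPlus_s18 hx).continuousAt.continuousWithinAt
  · rw [isOpen_Ioo.interior_eq]
    exact fun x hx => (hasDerivAt_fPlus_s18 hx).differentiableAt.differentiableWithinAt
  · rw [isOpen_Ioo.interior_eq]
    exact gF_monotone.congr (fun x hx => ((hasDerivAt_fPlus_s18 hx).deriv).symm)

lemma fPlus_zero : fPlus 0 = 0 := by
  have h : xPlus 0 = 1 := by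
    rw [xPlus]
    norm_num [alphaFn]
  rw [fPlus, h]
  norm_num

lemma sqrt_tendsto_atTop : Tendsto Real.sqrt atTop atTop := by
  apply tendsto_atTop_atTop_of_monotone (fun a b h => Real.sqrt_le_sqrt h)
  intro b
  exact ⟨(max b 0) ^ 2, by rw [Real.sqrt_sq (le_max_right b 0)]; exact le_max_left b 0⟩

lemma one_sub_tendsto : Tendsto (fun t : ℝ => 1 - t) (𝓝[<] (1:ℝ)) (𝓝[>] (0:ℝ)) := by
  rw [tendsto_nhdsWithin_iff]
  constructor
  · have : Tendsto (fun t : ℝ => 1 - t) (𝓝 1) (𝓝 (1 - 1)) :=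
      (tendsto_const_nhds.sub tendsto_id)
    norm_num at this
    exact this.mono_left nhdsWithin_le_nhds
  · filter_upwards [self_mem_nhdsWithin] with t ht
    simp only [mem_Iio] at ht
    simpa using ht

lemma denom_tendsto : Tendsto (fun t : ℝ => 1 / (t * (2 - t))) (𝓝[<] (1:ℝ)) (𝓝 1) := by
  have h : Tendsto (fun t : ℝ => 1 / (t * (2 - t))) (𝓝 1) (𝓝 (1 / (1 * (2 - 1)))) := by
    apply Tendsto.div tendsto_const_nhds
    · exact tendsto_id.mul (tendsto_const_nhds.sub tendsto_id)
    · norm_num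
  have h2 := h.mono_left (nhdsWithin_le_nhds : 𝓝[<] (1:ℝ) ≤ 𝓝 1)
  convert h2 using 2
  norm_num

lemma qF_tendsto : Tendsto qF (𝓝[<] (1:ℝ)) atTop := by
  have hlog : Tendsto (fun t : ℝ => Real.log (1 - t)) (𝓝[<] (1:ℝ)) atBot :=
    Real.tendsto_log_nhdsGT_zero.comp one_sub_tendsto
  have hneg : Tendsto (fun t : ℝ => -2 * Real.log (1 - t)) (𝓝[<] (1:ℝ)) atTop :=
    (tendsto_const_mul_atTop_of_neg (by norm_num : (-2:ℝ) < 0)).mpr hlog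
  have hmul := hneg.atTop_mul_pos (by norm_num : (0:ℝ) < 1) denom_tendsto
  refine hmul.congr' ?_
  filter_upwards [Ioo_mem_nhdsLT_of_mem (by norm_num : (1:ℝ) ∈ Ioc (1/2 : ℝ) 1)] with t ht
  rw [qF_eq (by linarith [ht.1] : t ≠ 0)]
  field_simp

lemma cF_tendsto : Tendsto cF (𝓝[<] (1:ℝ)) atTop := sqrt_tendsto_atTop.comp qF_tendsto

lemma sq_qF_tendsto : Tendsto (fun t => (1 - t) ^ 2 * qF t) (𝓝[<] (1:ℝ)) (𝓝 0) := by
  have hlogsq : Tendsto (fun t : ℝ => Real.log (1 - t) * (1 - t) ^ (2:ℝ)) (𝓝[<] (1:ℝ)) (𝓝 0) :=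
    (tendsto_log_mul_rpow_nhdsGT_zero (by norm_num : (0:ℝ) < 2)).comp one_sub_tendsto
  have h2 : Tendsto (fun t : ℝ => -2 * (Real.log (1 - t) * (1 - t) ^ (2:ℝ)) * (1 / (t * (2 - t))))
      (𝓝[<] (1:ℝ)) (𝓝 0) := by
    have := ((hlogsq.const_mul (-2:ℝ)).mul denom_tendsto)
    norm_num at this ⊢
    exact this
  refine h2.congr' ?_
  filter_upwards [Ioo_mem_nhdsLT_of_mem (by norm_num : (1:ℝ) ∈ Ioc (1/2 : ℝ) 1)] with t ht
  have h1t : (0:ℝ) < 1 - t := by linarith [ht.2]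
  rw [qF_eq (by linarith [ht.1] : t ≠ 0)]
  rw [show ((1:ℝ) - t) ^ (2:ℝ) = (1 - t) ^ (2:ℕ) from by
    rw [← Real.rpow_natCast (1 - t) 2]; norm_num]
  field_simp

lemma scF_tendsto : Tendsto (fun t => (1 - t) * cF t) (𝓝[<] (1:ℝ)) (𝓝 0) := by
  have h := (Real.continuous_sqrt.tendsto 0).comp sq_qF_tendsto
  rw [Real.sqrt_zero] at h
  refine h.congr' ?_
  filter_upwards [Ioo_mem_nhdsLT_of_mem (by norm_num : (1:ℝ) ∈ Ioc (1/2 : ℝ) 1)] with t ht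
  have h1t : (0:ℝ) ≤ 1 - t := by linarith [ht.2]
  simp only [Function.comp]
  rw [Real.sqrt_mul (sq_nonneg (1 - t)), Real.sqrt_sq h1t]
  rfl

lemma fPlus_tendsto : Tendsto fPlus (𝓝[<] (1:ℝ)) (𝓝 (1/2 : ℝ)) := by
  have h1 : Tendsto (fun t => Phi (cF t)) (𝓝[<] (1:ℝ)) (𝓝 1) :=
    Phi_tendsto_one.comp cF_tendsto
  have h2 : Tendsto (fun t => Phi ((1 - t) * cF t)) (𝓝[<] (1:ℝ)) (𝓝 (1/2 : ℝ)) := by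
    have := (Phi_continuous.tendsto 0).comp scF_tendsto
    rw [Phi_zero] at this
    exact this
  have := h1.sub h2
  norm_num at this
  refine this.congr' ?_
  filter_upwards [self_mem_nhdsWithin] with t ht
  exact (fPlus_eq ht).symm

theorem fPlus_le_half_t :
    Filter.Tendsto fPlus (nhdsWithin 1 (Set.Iio 1)) (nhds (1 / 2)) ∧
      fPlus 0 = 0 ∧
      ConvexOn ℝ (Set.Ioo (-1 : ℝ) 1) fPlus ∧
      ∀ t ∈ Set.Ico (0 : ℝ) 1, fPlus t ≤ t / 2 := by
  refine ⟨fPlus_tendsto, fPlus_zero, fPlus_convexOn, ?_⟩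
  rintro t ⟨ht0, ht1⟩
  rcases eq_or_lt_of_le ht0 with h | h
  · rw [← h, fPlus_zero]; norm_num
  have key : ∀ t' ∈ Ioo t 1, fPlus t ≤ t / t' * fPlus t' := by
    intro t' ht'
    have ht'0 : 0 < t' := lt_trans h ht'.1
    have hmem0 : (0:ℝ) ∈ Ioo (-1:ℝ) 1 := by norm_num
    have hmemt' : t' ∈ Ioo (-1:ℝ) 1 := ⟨by linarith, ht'.2⟩
    have hab : (1 - t / t') + t / t' = 1 := by ring
    have hb : 0 ≤ t / t' := div_nonneg ht0 ht'0.le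
    have ha : 0 ≤ 1 - t / t' := by
      have : t / t' ≤ 1 := (div_le_one ht'0).mpr ht'.1.le
      linarith
    have hcx := fPlus_convexOn.2 hmem0 hmemt' ha hb hab
    have harg : (1 - t / t') • (0:ℝ) + (t / t') • t' = t := by
      simp only [smul_eq_mul]
      field_simp
      ring
    rw [harg] at hcx
    rw [fPlus_zero] at hcx
    simpa using hcx
  have hlim : Tendsto (fun t' => t / t' * fPlus t') (𝓝[<] (1:ℝ)) (𝓝 (t / 2)) := by
    have hd : Tendsto (fun t' : ℝ => t / t') (𝓝[<] (1:ℝ)) (𝓝 t) := by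
      have : Tendsto (fun t' : ℝ => t / t') (𝓝 (1:ℝ)) (𝓝 (t / 1)) :=
        tendsto_const_nhds.div tendsto_id one_ne_zero
      norm_num at this
      exact this.mono_left nhdsWithin_le_nhds
    have := hd.mul fPlus_tendsto
    convert this using 2
    ring
  refine ge_of_tendsto hlim ?_
  filter_upwards [Ioo_mem_nhdsLT_of_mem (show (1:ℝ) ∈ Ioc t 1 from ⟨ht1, le_refl 1⟩)] with t' ht'
  exact key t' ht'
end
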